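/- Let J ⊆ I be an ideal generated by a Q-regular sequence g₁, …, g_d whose images ḡ₁, …, ḡ_d are k-linearly independent in V. Then J ∩ 𝔫I = 𝔫J, and consequently the natural map J/𝔫J → (J + 𝔫I)/𝔫I induced by the inclusion J ⊆ I is an isomorphism of k-vector spaces. -/

import Mathlib

open CategoryTheory IsLocalRing

/-- A local ring is regular if its maximal ideal can be generated by a regular sequence. -/
def IsRegularLocal (Q : Type) [CommRing Q] [IsLocalRing Q] : Prop :=
  ∃ rs : List Q, RingTheory.Sequence.IsRegular Q rs ∧
    Ideal.span {x | x ∈ rs} = maximalIdeal Q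

theorem Module.IsTorsionBySet.mono' {Q M : Type} [CommRing Q] [AddCommGroup M] [Module Q M]
    {J I : Ideal Q} (h : Module.IsTorsionBySet Q M (I : Set Q)) (hJI : J ≤ I) :
    Module.IsTorsionBySet Q M (J : Set Q) := fun x a => @h x ⟨a.1, hJI a.2⟩

/-- The `Q ⧸ J`-module structure on a module annihilated by `I ⊇ J`. -/
def modOver {Q : Type} [CommRing Q] {I : Ideal Q} (J : Ideal Q) (hJI : J ≤ I)
    (M : Type) [AddCommGroup M] [Module Q M]
    (hM : Module.IsTorsionBySet Q M (I : Set Q)) : Module (Q ⧸ J) M :=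
  (hM.mono' hJI).module

theorem quot_isTorsionBySet (Q : Type) [CommRing Q] (J : Ideal Q) :
    Module.IsTorsionBySet Q (Q ⧸ J) (J : Set Q) := fun x a => by
  induction x using Quotient.inductionOn with
  | h q =>
    show ((a : Q) • Submodule.Quotient.mk q : Q ⧸ J) = 0
    rw [← Submodule.Quotient.mk_smul, Submodule.Quotient.mk_eq_zero, smul_eq_mul]
    exact Ideal.mul_mem_right q J a.2

/-- The residue field `k = Q/𝔪` as a module over `Q ⧸ J` for any `J ≤ 𝔪`. -/
def kMod {Q : Type} [CommRing Q] [IsLocalRing Q] (J : Ideal Q) (hJm : J ≤ maximalIdeal Q) :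
    Module (Q ⧸ J) (Q ⧸ maximalIdeal Q) :=
  modOver J hJm (Q ⧸ maximalIdeal Q) (quot_isTorsionBySet Q (maximalIdeal Q))

/-- `Ext^i_A(M, N)`, as a module over `A`, for explicitly given module structures. -/
noncomputable def extMod (A : Type) [CommRing A] (M N : Type) [AddCommGroup M] [AddCommGroup N]
    (mM : Module A M) (mN : Module A N) (i : ℕ) : ModuleCat A :=
  ((Ext A (ModuleCat A) i).obj (Opposite.op (@ModuleCat.of A _ M _ mM))).obj
    (@ModuleCat.of A _ N _ mN)

/-- `Ext^i_A(M, N) ≠ 0` for infinitely many `i`. -/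
def extInf (A : Type) [CommRing A] (M N : Type) [AddCommGroup M] [AddCommGroup N]
    (mM : Module A M) (mN : Module A N) : Prop :=
  ∀ n : ℕ, ∃ i, n ≤ i ∧ Nontrivial (extMod A M N mM mN i)

/-- `Ext^i_A(M, N) = 0` for all `i ≫ 0`. -/
def extVan (A : Type) [CommRing A] (M N : Type) [AddCommGroup M] [AddCommGroup N]
    (mM : Module A M) (mN : Module A N) : Prop :=
  ∃ n₀ : ℕ, ∀ i, n₀ ≤ i → Subsingleton (extMod A M N mM mN i)

/-- The images in `V = I/𝔫I` of the elements `g i` of `I` are `k`-linearly independent. -/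
def LinIndepInV (Q : Type) [CommRing Q] [IsLocalRing Q] (I : Ideal Q)
    {d : ℕ} (g : Fin d → Q) : Prop :=
  (∀ i, g i ∈ I) ∧
    ∀ a : Fin d → Q, (∑ i, a i * g i) ∈ maximalIdeal Q * I → ∀ i, a i ∈ maximalIdeal Q

/-- The depth of a module over a local ring: the supremum of the lengths of
regular sequences on the module consisting of elements of the maximal ideal. -/
noncomputable def localDepth (Q : Type) [CommRing Q] [IsLocalRing Q]
    (M : Type) [AddCommGroup M] [Module Q M] : ℕ :=
  sSup {n | ∃ rs : List Q, rs.length = n ∧ (∀ r ∈ rs, r ∈ maximalIdeal Q) ∧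
    RingTheory.Sequence.IsRegular M rs}

/-!
An element of `J ∩ 𝔫I` is a combination `∑ aᵢ gᵢ` lying in `𝔫I`; linear independence of the
`ḡᵢ` in `I/𝔫I` forces every `aᵢ` into `𝔫`, so the element lies in `𝔫J`. Hence the kernel of
`J → I/𝔫I` is exactly `𝔫J`, which makes `J/𝔫J → (J + 𝔫I)/𝔫I` injective; it is onto by
construction.
-/

theorem Ideal.span_range_inf_le_mul_span {R ι : Type*} [CommRing R] [Fintype ι]
    (𝔪 P : Ideal R) (g : ι → R) (hg : ∀ a : ι → R, ∑ i, a i * g i ∈ P → ∀ i, a i ∈ 𝔪) :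
    Ideal.span (Set.range g) ⊓ P ≤ 𝔪 * Ideal.span (Set.range g) := by
  rintro x ⟨hxg, hxP⟩
  obtain ⟨a, rfl⟩ := (Submodule.mem_span_range_iff_exists_fun R).mp hxg
  simp only [smul_eq_mul] at hxP ⊢
  exact Ideal.sum_mem _ fun i _ =>
    Ideal.mul_mem_mul (hg a hxP i) (Ideal.subset_span ⟨i, rfl⟩)

theorem LinIndepInV.span_range_inf_mul_eq {Q : Type} [CommRing Q] [IsLocalRing Q]
    {I : Ideal Q} {d : ℕ} {g : Fin d → Q} (hg : LinIndepInV Q I g) :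
    Ideal.span (Set.range g) ⊓ (maximalIdeal Q * I) =
      maximalIdeal Q * Ideal.span (Set.range g) := by
  have hgI : Ideal.span (Set.range g) ≤ I := Ideal.span_le.mpr (Set.range_subset_iff.mpr hg.1)
  exact le_antisymm (Ideal.span_range_inf_le_mul_span _ _ g hg.2)
    (le_inf Ideal.mul_le_right (Ideal.mul_mono_right hgI))

namespace Submodule

variable {R M : Type*} [Ring R] [AddCommGroup M] [Module R M]

theorem injective_liftQ_mkQ_comp_subtype {J P K : Submodule R M} (h : J ⊓ P ≤ K)
    (hK : K.comap J.subtype ≤ LinearMap.ker (P.mkQ.comp J.subtype)) :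
    Function.Injective (liftQ (K.comap J.subtype) (P.mkQ.comp J.subtype) hK) := by
  rw [← LinearMap.ker_eq_bot]
  refine ker_liftQ_eq_bot _ _ _ fun x hx => ?_
  rw [LinearMap.ker_comp, ker_mkQ] at hx
  exact h ⟨x.2, hx⟩

theorem range_liftQ_mkQ_comp_subtype (J P K : Submodule R M)
    (hK : K.comap J.subtype ≤ LinearMap.ker (P.mkQ.comp J.subtype)) :
    LinearMap.range (liftQ (K.comap J.subtype) (P.mkQ.comp J.subtype) hK) =
      map P.mkQ (J ⊔ P) := by
  rw [range_liftQ, LinearMap.range_comp, range_subtype, map_sup, mkQ_map_self, sup_bot_eq]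

end Submodule

theorem statement1_general
    (Q : Type) [CommRing Q] [IsLocalRing Q]
    (I : Ideal Q)
    (d : ℕ) (g : Fin d → Q)
    (hglin : LinIndepInV Q I g)
    (J : Ideal Q) (hJg : J = Ideal.span (Set.range g))
 :
    J ⊓ (maximalIdeal Q * I) = maximalIdeal Q * J ∧
      ∀ (hker : Submodule.comap J.subtype (maximalIdeal Q * J) ≤
          LinearMap.ker ((maximalIdeal Q * I).mkQ.comp J.subtype)),
        Function.Injective (Submodule.liftQ (Submodule.comap J.subtype (maximalIdeal Q * J))
            ((maximalIdeal Q * I).mkQ.comp J.subtype) hker) ∧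
        LinearMap.range (Submodule.liftQ (Submodule.comap J.subtype (maximalIdeal Q * J))
            ((maximalIdeal Q * I).mkQ.comp J.subtype) hker) =
          Submodule.map (maximalIdeal Q * I).mkQ (J ⊔ maximalIdeal Q * I) := by
  subst hJg
  have hinf := hglin.span_range_inf_mul_eq
  exact ⟨hinf, fun hker => ⟨Submodule.injective_liftQ_mkQ_comp_subtype hinf.le hker,
    Submodule.range_liftQ_mkQ_comp_subtype _ _ _ hker⟩⟩

/-- `J ∩ 𝔫I = 𝔫J`, and the natural map `J/𝔫J → (J + 𝔫I)/𝔫I` is an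
isomorphism (it is injective with image `(J + 𝔫I)/𝔫I`). -/
theorem statement1
    (Q : Type) [CommRing Q] [IsLocalRing Q] [IsNoetherianRing Q]
    (hQreg : IsRegularLocal Q)
    (c : ℕ) (hc : 1 ≤ c) (f : Fin c → Q)
    (hfreg : RingTheory.Sequence.IsRegular Q (List.ofFn f))
    (I : Ideal Q) (hIf : I = Ideal.span (Set.range f))
    (hIsq : I ≤ maximalIdeal Q ^ 2)
    (d : ℕ) (g : Fin d → Q)
    (hgreg : RingTheory.Sequence.IsRegular Q (List.ofFn g))
    (hglin : LinIndepInV Q I g)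
    (J : Ideal Q) (hJg : J = Ideal.span (Set.range g)) (hJI : J ≤ I)
 :
    J ⊓ (maximalIdeal Q * I) = maximalIdeal Q * J ∧
      ∀ (hker : Submodule.comap J.subtype (maximalIdeal Q * J) ≤
          LinearMap.ker ((maximalIdeal Q * I).mkQ.comp J.subtype)),
        Function.Injective (Submodule.liftQ (Submodule.comap J.subtype (maximalIdeal Q * J))
            ((maximalIdeal Q * I).mkQ.comp J.subtype) hker) ∧
        LinearMap.range (Submodule.liftQ (Submodule.comap J.subtype (maximalIdeal Q * J))
            ((maximalIdeal Q * I).mkQ.comp J.subtype) hker) =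
          Submodule.map (maximalIdeal Q * I).mkQ (J ⊔ maximalIdeal Q * I) :=
  statement1_general Q I d g hglin J hJg
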